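/- arXiv:2201.06656 — 4 statements merged into one kernel-verified Lean document; each statement's English description precedes it below -/
import Mathlib

section
/- Let x, x_p : [0,∞) → ℝ^m solve x' = f(x,t) and x_p' = f(x_p,t) + d(x_p,t) respectively, where f satisfies (x−y)·(f(x,t)−f(y,t)) ≤ −λ‖x−y‖² for all x, y, t (one-sided Lipschitz / Euclidean contraction with rate λ > 0), and ‖d(·,·)‖ ≤ D uniformly. Then ‖x(t) − x_p(t)‖ ≤ ‖x(0) − x_p(0)‖·e^{−λt} + D/λ for all t ≥ 0. -/
/-!
Along the two solutions, `y = x - xp` satisfies `y' = f(x) - f(xp) - d(xp)`, so the contraction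
condition and Cauchy–Schwarz give `⟪y, y'⟫ ≤ (-λ‖y‖ + D)‖y‖`. Hence `‖y‖` has upper right Dini
derivative at most `-λ‖y‖ + D` (at a zero of `y` it is `‖y'‖ = ‖d‖ ≤ D`), and Grönwall's inequality
bounds it by `‖y 0‖ e^{-λt} + (D/λ)(1 - e^{-λt})`.
-/

open scoped RealInnerProductSpace
open Set Filter Topology

section

variable {F : Type*} [NormedAddCommGroup F] [InnerProductSpace ℝ F]

theorem HasDerivWithinAt.norm_of_ne_zero {y : ℝ → F} {y' : F} {s : Set ℝ} {t : ℝ}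
    (hy : HasDerivWithinAt y y' s t) (h0 : y t ≠ 0) :
    HasDerivWithinAt (‖y ·‖) (⟪y t, y'⟫ / ‖y t‖) s t := by
  have hsq : ‖y t‖ ^ 2 ≠ 0 := pow_ne_zero 2 (norm_ne_zero_iff.2 h0)
  convert hy.norm_sq.sqrt hsq using 1
  · simp only [Real.sqrt_sq (norm_nonneg _)]
  · rw [Real.sqrt_sq (norm_nonneg _)]
    ring

theorem HasDerivWithinAt.liminf_right_slope_norm_le_of_inner_le {y : ℝ → F} {y' : F}
    {t B r : ℝ} (hy : HasDerivWithinAt y y' (Ici t) t) (hinner : ⟪y t, y'⟫ ≤ B * ‖y t‖)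
    (hzero : y t = 0 → ‖y'‖ ≤ B) (hr : B < r) :
    ∃ᶠ z in 𝓝[>] t, (z - t)⁻¹ * (‖y z‖ - ‖y t‖) < r := by
  by_cases h0 : y t = 0
  · exact hy.liminf_right_slope_norm_le ((hzero h0).trans_lt hr)
  · have hpos : 0 < ‖y t‖ := norm_pos_iff.2 h0
    exact (hy.norm_of_ne_zero h0).liminf_right_slope_le
      (((div_le_iff₀ hpos).2 hinner).trans_lt hr)

theorem inner_sub_add_le_of_inner_sub_le {a b u v e : F} {lam D : ℝ}
    (hcontr : ⟪a - b, u - v⟫ ≤ -lam * ‖a - b‖ ^ 2) (he : ‖e‖ ≤ D) :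
    ⟪a - b, u - (v + e)⟫ ≤ (-lam * ‖a - b‖ + D) * ‖a - b‖ := by
  have hcs : -⟪a - b, e⟫ ≤ ‖a - b‖ * D :=
    (neg_le_abs _).trans ((abs_real_inner_le_norm _ _).trans
      (mul_le_mul_of_nonneg_left he (norm_nonneg _)))
  rw [sub_add_eq_sub_sub, inner_sub_right]
  nlinarith

theorem norm_sub_le_gronwallBound_of_contracting {f d : F → ℝ → F} {x xp : ℝ → F} {lam D t : ℝ}
    (hx : ∀ s, 0 ≤ s → HasDerivAt x (f (x s) s) s)
    (hxp : ∀ s, 0 ≤ s → HasDerivAt xp (f (xp s) s + d (xp s) s) s)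
    (hcontr : ∀ a b : F, ∀ s : ℝ, ⟪a - b, f a s - f b s⟫ ≤ -lam * ‖a - b‖ ^ 2)
    (hd : ∀ a s, ‖d a s‖ ≤ D) (ht : 0 ≤ t) :
    ‖x t - xp t‖ ≤ gronwallBound ‖x 0 - xp 0‖ (-lam) D t := by
  have hy (s : ℝ) (hs : 0 ≤ s) : HasDerivAt (fun u => x u - xp u)
      (f (x s) s - (f (xp s) s + d (xp s) s)) s :=
    (hx s hs).sub (hxp s hs)
  have hcont : ContinuousOn (fun u => ‖x u - xp u‖) (Icc 0 t) := fun s hs =>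
    (hy s hs.1).continuousAt.continuousWithinAt.norm
  have hslope : ∀ s ∈ Ico 0 t, ∀ r, -lam * ‖x s - xp s‖ + D < r →
      ∃ᶠ z in 𝓝[>] s, (z - s)⁻¹ * (‖x z - xp z‖ - ‖x s - xp s‖) < r := fun s hs r hr =>
    (hy s hs.1).hasDerivWithinAt.liminf_right_slope_norm_le_of_inner_le
      (inner_sub_add_le_of_inner_sub_le (hcontr _ _ s) (hd _ _))
      (fun h0 => by rw [sub_eq_zero.1 h0]; simpa using hd _ _) hr
  simpa using le_gronwallBound_of_liminf_deriv_right_le hcont hslope le_rfl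
    (fun s _ => le_rfl) t ⟨ht, le_rfl⟩

end

theorem gronwallBound_neg_le (δ : ℝ) {lam D t : ℝ} (hlam : 0 < lam) (hD : 0 ≤ D) :
    gronwallBound δ (-lam) D t ≤ δ * Real.exp (-lam * t) + D / lam := by
  have hexp : 0 < Real.exp (-lam * t) := Real.exp_pos _
  have hbound : D / -lam * (Real.exp (-lam * t) - 1) = D / lam * (1 - Real.exp (-lam * t)) := by
    rw [div_neg]; ring
  rw [gronwallBound_of_K_ne_0 (neg_ne_zero.2 hlam.ne')]
  dsimp only
  rw [hbound]
  gcongr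
  exact mul_le_of_le_one_right (div_nonneg hD hlam.le) (by linarith)

theorem contraction_robustness_ode {m : ℕ}
    (f d : EuclideanSpace ℝ (Fin m) → ℝ → EuclideanSpace ℝ (Fin m))
    (x xp : ℝ → EuclideanSpace ℝ (Fin m)) (lam D : ℝ) (hlam : 0 < lam) (hD : 0 ≤ D)
    (hx : ∀ t, 0 ≤ t → HasDerivAt x (f (x t) t) t)
    (hxp : ∀ t, 0 ≤ t → HasDerivAt xp (f (xp t) t + d (xp t) t) t)
    (hcontr : ∀ a b : EuclideanSpace ℝ (Fin m), ∀ t : ℝ,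
      ⟪a - b, f a t - f b t⟫ ≤ -lam * ‖a - b‖ ^ 2)
    (hd : ∀ a t, ‖d a t‖ ≤ D) :
    ∀ t, 0 ≤ t → ‖x t - xp t‖ ≤ ‖x 0 - xp 0‖ * Real.exp (-lam * t) + D / lam := by
  intro t ht
  exact (norm_sub_le_gronwallBound_of_contracting hx hxp hcontr hd ht).trans
    (gronwallBound_neg_le _ hlam hD)
end

section
/- Let A be a symmetric negative definite m×m matrix, and let λ* = −λ_max(A) > 0 be the best possible Euclidean contraction rate of x' = Ax. For any symmetric positive definite M and λ > 0 with MA + AᵀM ⪯ −2λM, one has λ ≤ λ*. Moreover, the metric M = −(1/2)A⁻¹ achieves MA + AᵀM ⪯ −2λ*·M. -/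
/-!
Testing the inequality `MA + AᵀM ⪯ -2λM` on an eigenvector `v` of `A` for its top eigenvalue `μ`
gives `(-2λ - 2μ) vᵀMv ≥ 0`, hence `λ ≤ -μ = λ*`. The metric `M = -A⁻¹/2` solves the Lyapunov
equation `MA + AM = -I`, so for it the inequality reads `λ* A⁻¹ + I ⪰ 0`, which holds by the
functional calculus because `λ*/x + 1 ≥ 0` for every eigenvalue `x ≤ -λ* < 0` of `A`.
-/

open scoped Matrix ComplexOrder MatrixOrder

namespace Matrix

variable {n 𝕜 : Type*} [Fintype n] [RCLike 𝕜]

theorem contraction_rate_le_neg_eigenvalue {A M : Matrix n n ℝ} {v : n → ℝ} {μ lam : ℝ}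
    (hv : A *ᵥ v = μ • v) (hv₀ : v ≠ 0) (hM : M.PosDef)
    (hlyap : (-(2 * lam) • M - (M * A + Aᵀ * M)).PosSemidef) : lam ≤ -μ := by
  have hMv : 0 < v ⬝ᵥ M *ᵥ v := by simpa using hM.dotProduct_mulVec_pos hv₀
  have hquad : v ⬝ᵥ (-(2 * lam) • M - (M * A + Aᵀ * M)) *ᵥ v
      = (-(2 * lam) - 2 * μ) * (v ⬝ᵥ M *ᵥ v) := by
    rw [sub_mulVec, add_mulVec, ← mulVec_mulVec, ← mulVec_mulVec, hv, dotProduct_sub,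
      dotProduct_add, dotProduct_mulVec v Aᵀ, vecMul_transpose, hv]
    simp only [smul_mulVec, mulVec_smul, dotProduct_smul, smul_dotProduct, smul_eq_mul]
    ring
  have hnonneg := hlyap.dotProduct_mulVec_nonneg v
  simp only [star_trivial, hquad] at hnonneg
  nlinarith

variable [DecidableEq n]

theorem spectrum_lt_zero_of_posDef_neg {A : Matrix n n 𝕜} (hA : (-A).PosDef) :
    ∀ x ∈ spectrum ℝ A, x < 0 := by
  intro x hx
  have hsa : IsSelfAdjoint A := by simpa using hA.isHermitian.neg.isSelfAdjoint
  have hpos := (StarOrderedRing.isStrictlyPositive_iff_spectrum_pos (R := ℝ) (-A)).1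
    (isStrictlyPositive_iff_posDef.2 hA)
  have := hpos (-x) (by rw [← spectrum.neg_eq]; simpa using hx)
  linarith

theorem posSemidef_smul_inv_add_one {A : Matrix n n 𝕜} (hA : A.IsHermitian) {c : ℝ} (hc : 0 < c)
    (hspec : ∀ x ∈ spectrum ℝ A, x ≤ -c) : (c • A⁻¹ + 1).PosSemidef := by
  have hunit : IsUnit A := (spectrum.zero_notMem_iff ℝ).1 fun h₀ => by linarith [hspec 0 h₀]
  have hcfc : c • A⁻¹ + 1 = cfc (fun x : ℝ => c * x⁻¹ + 1) A := by
    have hcont (f : ℝ → ℝ) : ContinuousOn f (spectrum ℝ A) := A.finite_real_spectrum.continuousOn f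
    rw [cfc_add_const _ _ _ (hcont _), cfc_const_mul _ _ _ (hcont _), cfc_ringInverse_id A hunit,
      nonsing_inv_eq_ringInverse]
    simp
  rw [← nonneg_iff_posSemidef, hcfc]
  refine cfc_nonneg fun x hx => ?_
  have hx_le := hspec x hx
  rw [show c * x⁻¹ = -(c / -x) by ring, neg_add_eq_sub, sub_nonneg, div_le_one (by linarith)]
  linarith

theorem neg_half_inv_mul_add_transpose_mul_eq_neg_one {A : Matrix n n ℝ} (hA : IsUnit A)
    (hAT : Aᵀ = A) : (-(1 / 2 : ℝ) • A⁻¹) * A + Aᵀ * (-(1 / 2 : ℝ) • A⁻¹) = -1 := by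
  rw [hAT, smul_mul, Matrix.mul_smul, nonsing_inv_mul _ ((isUnit_iff_isUnit_det A).1 hA),
    mul_nonsing_inv _ ((isUnit_iff_isUnit_det A).1 hA)]
  module

end Matrix

open Matrix

theorem optimal_contraction_rate_symmetric {m : ℕ} [NeZero m]
    (A : Matrix (Fin m) (Fin m) ℝ) (hA : A.IsHermitian) (hAneg : (-A).PosDef)
    (lamStar : ℝ) (hlamStar : lamStar = -(⨆ i, hA.eigenvalues i)) :
    (∀ (M : Matrix (Fin m) (Fin m) ℝ) (lam : ℝ), M.PosDef → 0 < lam →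
        (-(2 * lam) • M - (M * A + Aᵀ * M)).PosSemidef → lam ≤ lamStar) ∧
      ((-(2 * lamStar)) • (-(1 / 2 : ℝ) • A⁻¹) -
        ((-(1 / 2 : ℝ) • A⁻¹) * A + Aᵀ * (-(1 / 2 : ℝ) • A⁻¹))).PosSemidef := by
  obtain ⟨i₀, hi₀⟩ := exists_eq_ciSup_of_finite (f := hA.eigenvalues)
  rw [← hi₀] at hlamStar
  have hspec_le : ∀ x ∈ spectrum ℝ A, x ≤ -lamStar := by
    rw [hA.spectrum_real_eq_range_eigenvalues, hlamStar, neg_neg, hi₀]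
    rintro _ ⟨i, rfl⟩
    exact le_ciSup (Finite.bddAbove_range _) i
  refine ⟨fun M lam hM _ hlyap => ?_, ?_⟩
  · have hv₀ : (⇑(hA.eigenvectorBasis i₀) : Fin m → ℝ) ≠ 0 := by
      simpa using hA.eigenvectorBasis.orthonormal.ne_zero i₀
    rw [hlamStar]
    exact contraction_rate_le_neg_eigenvalue (hA.mulVec_eigenvectorBasis i₀) hv₀ hM hlyap
  · have hlamStar_pos : 0 < lamStar := by
      rw [hlamStar, neg_pos]
      exact spectrum_lt_zero_of_posDef_neg hAneg _ (hA.eigenvalues_mem_spectrum_real i₀)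
    rw [neg_half_inv_mul_add_transpose_mul_eq_neg_one (by simpa using hAneg.isUnit.neg)
      (by simpa using hA.eq)]
    have hlhs : -(2 * lamStar) • (-(1 / 2 : ℝ) • A⁻¹) - -1 = lamStar • A⁻¹ + 1 := by
      module
    exact hlhs ▸ posSemidef_smul_inv_add_one hA hlamStar_pos hspec_le
end

section
/- Let J be a symmetric negative definite matrix. Among all pairs (M, λ) with M symmetric positive definite, λ > 0, and MJ + JM ⪯ −2λM, the quantity χ(M)/λ, where χ(M) = √(λ_max(M)/λ_min(M)), is minimized by M = I with λ = −λ_max(J), i.e., χ(M)/λ ≥ 1/(−λ_max(J)) for all admissible (M, λ). -/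
/-!
Test the contraction inequality `-2λM - (MJ + JM) ⪰ 0` against an eigenvector `v` of `J` for its
top eigenvalue `μ`: since `J` is symmetric, `vᵀ(MJ + JM)v = 2μ vᵀMv`, so `-2(λ + μ) vᵀMv ≥ 0`,
and `vᵀMv > 0` forces `λ ≤ -μ`. Together with `χ(M) ≥ 1` this gives
`1/(-μ) ≤ 1/λ ≤ χ(M)/λ`.
-/

open scoped Matrix
open Matrix

theorem Matrix.dotProduct_mulVec_mul_add_mul_of_mulVec_eq_smul {n R : Type*} [Fintype n]
    [CommRing R] {J M : Matrix n n R} (hJ : J.IsSymm) {μ : R} {v : n → R}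
    (hv : J *ᵥ v = μ • v) :
    v ⬝ᵥ ((M * J + J * M) *ᵥ v) = 2 * μ * (v ⬝ᵥ (M *ᵥ v)) := by
  have hvJ : v ᵥ* J = μ • v := by rw [← mulVec_transpose, hJ.eq, hv]
  rw [add_mulVec, dotProduct_add, ← mulVec_mulVec, ← mulVec_mulVec, hv, mulVec_smul,
    dotProduct_smul, dotProduct_mulVec v J, hvJ, smul_dotProduct, smul_eq_mul]
  ring

theorem Matrix.le_neg_of_posSemidef_contraction {n : Type*} [Fintype n]
    {J M : Matrix n n ℝ} (hJ : J.IsSymm) (hM : M.PosDef) {lam μ : ℝ} {v : n → ℝ} (hv0 : v ≠ 0)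
    (hv : J *ᵥ v = μ • v) (hcontr : (-(2 * lam) • M - (M * J + J * M)).PosSemidef) :
    lam ≤ -μ := by
  have hpos : 0 < v ⬝ᵥ (M *ᵥ v) := by simpa using hM.dotProduct_mulVec_pos hv0
  have hnonneg : 0 ≤ -(2 * (lam + μ)) * (v ⬝ᵥ (M *ᵥ v)) := by
    have h := hcontr.dotProduct_mulVec_nonneg v
    rw [star_trivial, sub_mulVec, dotProduct_sub, smul_mulVec, dotProduct_smul, smul_eq_mul,
      dotProduct_mulVec_mul_add_mul_of_mulVec_eq_smul hJ hv] at h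
    linarith
  linarith [nonneg_of_mul_nonneg_left hnonneg hpos]

theorem Real.one_le_sqrt_ciSup_div_ciInf {ι : Type*} [Finite ι] [Nonempty ι] {f : ι → ℝ}
    (hf : ∀ i, 0 < f i) : 1 ≤ √((⨆ i, f i) / ⨅ i, f i) := by
  obtain ⟨i, hi⟩ := exists_eq_ciInf_of_finite (f := f)
  have hinf : 0 < ⨅ i, f i := hi ▸ hf i
  exact Real.one_le_sqrt.mpr <| (one_le_div hinf).mpr <|
    ciInf_le_ciSup (Set.finite_range f).bddBelow (Set.finite_range f).bddAbove

theorem identity_metric_minimizes_stability_bound_general {m : ℕ} [NeZero m]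
    (J : Matrix (Fin m) (Fin m) ℝ) (hJ : J.IsHermitian)
    (M : Matrix (Fin m) (Fin m) ℝ) (hM : M.PosDef) (lam : ℝ) (hlam : 0 < lam)
    (hcontr : (-(2 * lam) • M - (M * J + J * M)).PosSemidef) :
    1 / (-(⨆ i, hJ.eigenvalues i)) ≤
      Real.sqrt ((⨆ i, hM.1.eigenvalues i) / (⨅ i, hM.1.eigenvalues i)) / lam := by
  obtain ⟨i, hi⟩ := exists_eq_ciSup_of_finite (f := hJ.eigenvalues)
  have hv0 : ⇑(hJ.eigenvectorBasis i) ≠ 0 :=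
    (WithLp.ofLp_eq_zero (p := 2)).not.mpr (hJ.eigenvectorBasis.orthonormal.ne_zero i)
  have hlam_le : lam ≤ -hJ.eigenvalues i :=
    le_neg_of_posSemidef_contraction (isHermitian_iff_isSymm.mp hJ) hM hv0
      (hJ.mulVec_eigenvectorBasis i) hcontr
  rw [← hi]
  calc 1 / -hJ.eigenvalues i ≤ 1 / lam := one_div_le_one_div_of_le hlam hlam_le
    _ ≤ _ := div_le_div_of_nonneg_right
        (Real.one_le_sqrt_ciSup_div_ciInf hM.eigenvalues_pos) hlam.le

theorem identity_metric_minimizes_stability_bound {m : ℕ} [NeZero m]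
    (J : Matrix (Fin m) (Fin m) ℝ) (hJ : J.IsHermitian) (hJneg : (-J).PosDef)
    (M : Matrix (Fin m) (Fin m) ℝ) (hM : M.PosDef) (lam : ℝ) (hlam : 0 < lam)
    (hcontr : (-(2 * lam) • M - (M * J + J * M)).PosSemidef) :
    1 / (-(⨆ i, hJ.eigenvalues i)) ≤
      Real.sqrt ((⨆ i, hM.1.eigenvalues i) / (⨅ i, hM.1.eigenvalues i)) / lam :=
  identity_metric_minimizes_stability_bound_general J hJ M hM lam hlam hcontr
end

section
/- If an algorithm A mapping datasets of size n to parameters is ε-uniformly stable and the loss is bounded, then the expected generalization gap satisfies |E_{S,A}[R[A(S)] − R_S[A(S)]]| ≤ ε, where R is the population risk under distribution D and R_S the empirical risk on the i.i.d. sample S. -/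
open MeasureTheory

lemma integrable_of_abs_bound {α : Type*} [MeasurableSpace α] (ρ : Measure α)
    [IsFiniteMeasure ρ] {f : α → ℝ} {C : ℝ} (hf : AEStronglyMeasurable f ρ)
    (hb : ∀ a, |f a| ≤ C) : Integrable f ρ :=
  (integrable_const C).mono' hf (ae_of_all _ (by simpa using hb))

lemma abs_integral_le_of_abs_bound {α : Type*} [MeasurableSpace α] (ρ : Measure α)
    [IsProbabilityMeasure ρ] {f : α → ℝ} {C : ℝ} (hb : ∀ a, |f a| ≤ C) :
    |∫ a, f a ∂ρ| ≤ C := by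
  have := norm_integral_le_of_norm_le_const (μ := ρ) (f := f) (C := C)
    (ae_of_all _ (by simpa using hb))
  simpa using this

theorem uniform_stability_implies_generalization_in_expectation
    {Z E : Type*} [MeasurableSpace Z] {n : ℕ} (hn : 0 < n)
    (D : Measure Z) [IsProbabilityMeasure D]
    (A : (Fin n → Z) → E) (ℓ : E → Z → ℝ) (ε C : ℝ) (hε : 0 ≤ ε)
    (hbound : ∀ θ z, |ℓ θ z| ≤ C)
    (hmeas : Measurable fun p : (Fin n → Z) × Z => ℓ (A p.1) p.2)
    (hstable : ∀ S S' : Fin n → Z, (∃ j : Fin n, ∀ i : Fin n, i ≠ j → S i = S' i) →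
      ∀ z : Z, ℓ (A S) z - ℓ (A S') z ≤ ε) :
    |∫ S, ((∫ z, ℓ (A S) z ∂D) - (1 / (n : ℝ)) * ∑ i : Fin n, ℓ (A S) (S i))
        ∂(Measure.pi fun _ : Fin n => D)| ≤ ε := by
  obtain ⟨m, rfl⟩ : ∃ m, n = m + 1 := ⟨n - 1, (Nat.succ_pred_eq_of_pos hn).symm⟩
  set μ : Measure (Fin (m + 1) → Z) := Measure.pi fun _ => D with hμ
  have hstab2 : ∀ S S' : Fin (m+1) → Z, (∃ j : Fin (m+1), ∀ i : Fin (m+1), i ≠ j → S i = S' i) →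
      ∀ z : Z, |ℓ (A S) z - ℓ (A S') z| ≤ ε := by
    intro S S' h z
    rw [abs_le]
    refine ⟨?_, hstable S S' h z⟩
    have := hstable S' S (by obtain ⟨j, hj⟩ := h; exact ⟨j, fun i hi => (hj i hi).symm⟩) z
    linarith
  have measApp : ∀ i : Fin (m+1), Measurable fun S : Fin (m+1) → Z => ℓ (A S) (S i) :=
    fun i => hmeas.comp (measurable_id.prodMk (measurable_pi_apply i))
  have measInt : StronglyMeasurable fun S : Fin (m+1) → Z => ∫ z, ℓ (A S) z ∂D :=
    hmeas.stronglyMeasurable.integral_prod_right'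
  have bInt : ∀ S : Fin (m+1) → Z, |∫ z, ℓ (A S) z ∂D| ≤ C := fun S =>
    abs_integral_le_of_abs_bound D (hbound (A S))
  -- the key estimate for each coordinate
  have key : ∀ i : Fin (m+1),
      |(∫ S, ∫ z, ℓ (A S) z ∂D ∂μ) - ∫ S, ℓ (A S) (S i) ∂μ| ≤ ε := by
    intro i
    set ν : Measure (Fin m → Z) := Measure.pi fun _ => D with hν
    set e := MeasurableEquiv.piFinSuccAbove (fun _ : Fin (m+1) => Z) i with he
    have hpres : MeasurePreserving e μ (D.prod ν) :=
      measurePreserving_piFinSuccAbove (fun _ => D) i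
    have hsymm : ∀ p : Z × (Fin m → Z), e.symm p = i.insertNth p.1 p.2 := fun p => rfl
    have hA : (∫ S, ∫ z, ℓ (A S) z ∂D ∂μ)
        = ∫ p : Z × (Fin m → Z), ∫ z, ℓ (A (i.insertNth p.1 p.2)) z ∂D ∂(D.prod ν) := by
      rw [← hpres.integral_comp' (fun p => ∫ z, ℓ (A (i.insertNth p.1 p.2)) z ∂D)]
      refine integral_congr_ae (ae_of_all _ fun S => ?_)
      simp only
      rw [show i.insertNth (e S).1 (e S).2 = e.symm (e S) from (hsymm _).symm,
        e.symm_apply_apply]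
    have hB : (∫ S, ℓ (A S) (S i) ∂μ)
        = ∫ p : Z × (Fin m → Z), ℓ (A (i.insertNth p.1 p.2)) p.1 ∂(D.prod ν) := by
      rw [← hpres.integral_comp' (fun p => ℓ (A (i.insertNth p.1 p.2)) p.1)]
      refine integral_congr_ae (ae_of_all _ fun S => ?_)
      simp only
      have h1 : i.insertNth (e S).1 (e S).2 = S := by
        rw [show i.insertNth (e S).1 (e S).2 = e.symm (e S) from (hsymm _).symm,
          e.symm_apply_apply]
      have h2 : (e S).1 = S i := rfl
      rw [h1, h2]
    have measIns : Measurable fun p : Z × (Fin m → Z) => (i.insertNth p.1 p.2 : Fin (m+1) → Z) := by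
      have h : (fun p : Z × (Fin m → Z) => (i.insertNth p.1 p.2 : Fin (m+1) → Z))
          = fun p => e.symm p := by funext p; rw [hsymm]
      rw [h]; exact e.symm.measurable
    have measB : Measurable fun p : Z × (Fin m → Z) => ℓ (A (i.insertNth p.1 p.2)) p.1 :=
      hmeas.comp (measIns.prodMk measurable_fst)
    have measA : StronglyMeasurable fun p : Z × (Fin m → Z) =>
        ∫ z, ℓ (A (i.insertNth p.1 p.2)) z ∂D := by
      have h : Measurable fun q : (Z × (Fin m → Z)) × Z => ℓ (A (i.insertNth q.1.1 q.1.2)) q.2 :=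
        hmeas.comp ((measIns.comp measurable_fst).prodMk measurable_snd)
      exact h.stronglyMeasurable.integral_prod_right'
    have intA : Integrable (fun p : Z × (Fin m → Z) =>
        ∫ z, ℓ (A (i.insertNth p.1 p.2)) z ∂D) (D.prod ν) :=
      integrable_of_abs_bound _ measA.aestronglyMeasurable fun p => bInt _
    have intB : Integrable (fun p : Z × (Fin m → Z) =>
        ℓ (A (i.insertNth p.1 p.2)) p.1) (D.prod ν) :=
      integrable_of_abs_bound _ measB.aestronglyMeasurable fun p => hbound _ _
    have hA2 : (∫ p : Z × (Fin m → Z), ∫ z, ℓ (A (i.insertNth p.1 p.2)) z ∂D ∂(D.prod ν))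
        = ∫ T, ∫ x, ∫ z, ℓ (A (i.insertNth x T)) z ∂D ∂D ∂ν := by
      rw [integral_prod _ intA, integral_integral_swap intA]
    have hB2 : (∫ p : Z × (Fin m → Z), ℓ (A (i.insertNth p.1 p.2)) p.1 ∂(D.prod ν))
        = ∫ T, ∫ x, ℓ (A (i.insertNth x T)) x ∂D ∂ν := by
      rw [integral_prod _ intB, integral_integral_swap intB]
    rw [hA, hB, hA2, hB2]
    -- measurability of the iterated integrals as functions of T
    have measSwapB : Measurable fun q : (Fin m → Z) × Z => ℓ (A (i.insertNth q.2 q.1)) q.2 :=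
      hmeas.comp ((measIns.comp (measurable_snd.prodMk measurable_fst)).prodMk measurable_snd)
    have measQ : StronglyMeasurable fun T : Fin m → Z => ∫ x, ℓ (A (i.insertNth x T)) x ∂D :=
      measSwapB.stronglyMeasurable.integral_prod_right'
    have measP : StronglyMeasurable fun T : Fin m → Z =>
        ∫ x, ∫ z, ℓ (A (i.insertNth x T)) z ∂D ∂D := by
      have h : Measurable fun q : ((Fin m → Z) × Z) × Z => ℓ (A (i.insertNth q.1.2 q.1.1)) q.2 :=
        hmeas.comp (((measIns.comp (measurable_snd.prodMk measurable_fst)).comp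
          measurable_fst).prodMk measurable_snd)
      exact (h.stronglyMeasurable.integral_prod_right').integral_prod_right'
    have intQ : Integrable (fun T : Fin m → Z => ∫ x, ℓ (A (i.insertNth x T)) x ∂D) ν :=
      integrable_of_abs_bound _ measQ.aestronglyMeasurable fun T =>
        abs_integral_le_of_abs_bound D fun x => hbound _ _
    have intP : Integrable (fun T : Fin m → Z =>
        ∫ x, ∫ z, ℓ (A (i.insertNth x T)) z ∂D ∂D) ν :=
      integrable_of_abs_bound _ measP.aestronglyMeasurable fun T =>
        abs_integral_le_of_abs_bound D fun x => bInt _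
    rw [← integral_sub intP intQ]
    refine abs_integral_le_of_abs_bound ν fun T => ?_
    -- now everything is at fixed T
    have measgT : Measurable fun x : Z => ℓ (A (i.insertNth x T)) x :=
      hmeas.comp ((measIns.comp (measurable_id.prodMk measurable_const)).prodMk measurable_id)
    have intg : Integrable (fun x => ℓ (A (i.insertNth x T)) x) D :=
      integrable_of_abs_bound _ measgT.aestronglyMeasurable fun x => hbound _ _
    have measGT : StronglyMeasurable fun x : Z => ∫ z, ℓ (A (i.insertNth x T)) z ∂D := by
      have h : Measurable fun q : Z × Z => ℓ (A (i.insertNth q.1 T)) q.2 :=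
        hmeas.comp (((measIns.comp (measurable_id.prodMk measurable_const)).comp
          measurable_fst).prodMk measurable_snd)
      exact h.stronglyMeasurable.integral_prod_right'
    have intG : Integrable (fun x => ∫ z, ℓ (A (i.insertNth x T)) z ∂D) D :=
      integrable_of_abs_bound _ measGT.aestronglyMeasurable fun x => bInt _
    have hconst : (∫ x, ℓ (A (i.insertNth x T)) x ∂D)
        = ∫ x, (∫ z, ℓ (A (i.insertNth z T)) z ∂D) ∂D := by
      rw [integral_const]; simp
    rw [hconst, ← integral_sub intG (integrable_const _)]
    refine abs_integral_le_of_abs_bound D fun x => ?_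
    have intg2 : Integrable (fun z => ℓ (A (i.insertNth z T)) z) D := intg
    have intf2 : Integrable (fun z => ℓ (A (i.insertNth x T)) z) D :=
      integrable_of_abs_bound _
        ((hmeas.comp (measurable_const.prodMk measurable_id)).aestronglyMeasurable)
        fun z => hbound _ _
    rw [← integral_sub intf2 intg2]
    refine abs_integral_le_of_abs_bound D fun z => ?_
    refine hstab2 _ _ ⟨i, fun j hj => ?_⟩ z
    obtain ⟨k, rfl⟩ := Fin.exists_succAbove_eq hj
    rw [Fin.insertNth_apply_succAbove, Fin.insertNth_apply_succAbove]
  -- assemble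
  have intIntZ : Integrable (fun S => ∫ z, ℓ (A S) z ∂D) μ :=
    integrable_of_abs_bound _ measInt.aestronglyMeasurable bInt
  have intApp : ∀ i : Fin (m+1), Integrable (fun S => ℓ (A S) (S i)) μ := fun i =>
    integrable_of_abs_bound _ (measApp i).aestronglyMeasurable fun S => hbound _ _
  have intSum : Integrable (fun S => (1 / ((m:ℝ)+1)) * ∑ i : Fin (m+1), ℓ (A S) (S i)) μ :=
    (integrable_finset_sum _ fun i _ => intApp i).const_mul _
  have hsplit : (∫ S, ((∫ z, ℓ (A S) z ∂D)
        - (1 / ((m+1 : ℕ) : ℝ)) * ∑ i : Fin (m+1), ℓ (A S) (S i)) ∂μ)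
      = (1 / ((m:ℝ)+1)) * ∑ i : Fin (m+1),
          ((∫ S, ∫ z, ℓ (A S) z ∂D ∂μ) - ∫ S, ℓ (A S) (S i) ∂μ) := by
    push_cast
    rw [integral_sub intIntZ intSum, integral_const_mul,
      integral_finset_sum _ fun i _ => intApp i]
    have hsum : ∑ i : Fin (m+1), ((∫ S, ∫ z, ℓ (A S) z ∂D ∂μ) - ∫ S, ℓ (A S) (S i) ∂μ)
        = ((m:ℝ)+1) * (∫ S, ∫ z, ℓ (A S) z ∂D ∂μ)
          - ∑ i : Fin (m+1), ∫ S, ℓ (A S) (S i) ∂μ := by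
      rw [Finset.sum_sub_distrib, Finset.sum_const, Finset.card_univ, Fintype.card_fin,
        nsmul_eq_mul]
      push_cast; ring
    rw [hsum]
    have hne : ((m:ℝ)+1) ≠ 0 := by positivity
    field_simp
  rw [hsplit, abs_mul]
  have h1 : |1 / ((m:ℝ)+1)| = 1 / ((m:ℝ)+1) := abs_of_pos (by positivity)
  rw [h1]
  have h2 : |∑ i : Fin (m+1), ((∫ S, ∫ z, ℓ (A S) z ∂D ∂μ) - ∫ S, ℓ (A S) (S i) ∂μ)|
      ≤ ((m:ℝ)+1) * ε := by
    calc _ ≤ ∑ i : Fin (m+1), |(∫ S, ∫ z, ℓ (A S) z ∂D ∂μ) - ∫ S, ℓ (A S) (S i) ∂μ| :=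
            Finset.abs_sum_le_sum_abs _ _
      _ ≤ ∑ _i : Fin (m+1), ε := Finset.sum_le_sum fun i _ => key i
      _ = ((m:ℝ)+1) * ε := by
            rw [Finset.sum_const, Finset.card_univ, Fintype.card_fin, nsmul_eq_mul]
            push_cast; ring
  calc 1 / ((m:ℝ)+1) * |_| ≤ 1 / ((m:ℝ)+1) * (((m:ℝ)+1) * ε) := by
        exact mul_le_mul_of_nonneg_left h2 (by positivity)
    _ = ε := by field_simp
end
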